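/- Let a, b be positive integers with b | a and such that every prime p dividing a also divides a/b. Then the sequence (a^n / b)_{n≥1} is realizable: Σ_{d|n} μ(n/d)·a^d/b is a non-negative integer divisible by n for every n ≥ 1. -/

import Mathlib

open Finset ArithmeticFunction
open scoped ArithmeticFunction.Moebius

/-!
Since `b ∣ a`, the terms are `a ^ d / b = c * a ^ (d - 1)` with `c = a / b`.

Divisibility by `n` is checked one prime `p` at a time. Write `n = p ^ (k + 1) * m` with `p ∤ m`.
In `∑_{e ∣ n} μ(e) f(n / e)` only squarefree `e` contribute, and these come in pairs `e`, `p * e`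
with `e ∣ m`. So the sum is a combination of the differences `f(p ^ (k + 1) * m') - f(p ^ k * m')`.
For `f(d) = c * a ^ (d - 1)` each difference is divisible by `p ^ (k + 1)`. If `p ∤ a`, this follows
from Fermat's little theorem and lifting the exponent, because `a` is invertible mod `p`. If
`p ∣ a`, then `p ∣ c` by hypothesis, and both terms are divisible by `p ^ (k + 1)`.

Nonnegativity: `a` times the sum equals `c * ∑_{d ∣ n} μ(n / d) a ^ d`. For `a ≥ 2` this last sum is
nonnegative because `a ^ n` is larger than the geometric sum of the lower powers. For `a ≤ 1` it is
`a * ∑_{d ∣ n} μ(d)`.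
-/

theorem Nat.Coprime.sum_divisors_mul_eq_sum_sum {M : Type*} [AddCommMonoid M] {m n : ℕ}
    (hmn : m.Coprime n) (f : ℕ → M) :
    ∑ d ∈ (m * n).divisors, f d = ∑ x ∈ m.divisors, ∑ y ∈ n.divisors, f (x * y) := by
  rw [hmn.divisors_mul, sum_map]
  exact (sum_attach _ fun q => f (q.1 * q.2)).trans (sum_product _ _ _)

theorem sum_divisors_moebius_div_mul_eq_sum_moebius_mul_div (n : ℕ) (f : ℕ → ℤ) :
    ∑ d ∈ n.divisors, μ (n / d) * f d = ∑ e ∈ n.divisors, μ e * f (n / e) := by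
  rw [← Nat.sum_div_divisors n]
  exact sum_congr rfl fun d hd => by rw [Nat.div_div_self (Nat.dvd_of_mem_divisors hd)
    (Nat.ne_zero_of_mem_divisors hd)]

theorem sum_divisors_prime_pow_mul_moebius_mul {p m : ℕ} (hp : p.Prime) (hpm : ¬p ∣ m) (k : ℕ)
    (g : ℕ → ℤ) :
    ∑ e ∈ (p ^ (k + 1) * m).divisors, μ e * g e = ∑ e ∈ m.divisors, μ e * (g e - g (p * e)) := by
  have hcop : ∀ i, ∀ e ∈ m.divisors, (p ^ i).Coprime e := fun i e he =>
    (hp.coprime_iff_not_dvd.mpr fun hpe => hpm (hpe.trans (Nat.dvd_of_mem_divisors he))).pow_left i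
  have hvanish : ∀ i, ∀ e ∈ m.divisors, μ (p ^ (i + 2) * e) = 0 := fun i e he => by
    rw [isMultiplicative_moebius.map_mul_of_coprime (hcop _ e he),
      moebius_apply_prime_pow hp (by omega), if_neg (by omega), zero_mul]
  rw [((hp.coprime_iff_not_dvd.mpr hpm).pow_left _).sum_divisors_mul_eq_sum_sum,
    Nat.sum_divisors_prime_pow hp, sum_range_succ', sum_range_succ',
    sum_eq_zero fun i _ => sum_eq_zero fun e he => by rw [hvanish i e he, zero_mul],
    zero_add, add_comm, ← sum_add_distrib]
  refine sum_congr rfl fun e he => ?_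
  rw [zero_add, pow_one, pow_zero, one_mul, isMultiplicative_moebius.map_mul_of_coprime
    (by simpa using hcop 1 e he), moebius_apply_prime hp]
  ring

theorem pow_factorization_dvd_sum_divisors_moebius_mul {f : ℕ → ℤ}
    (hf : ∀ p k m : ℕ, p.Prime → 0 < m → (p : ℤ) ^ (k + 1) ∣ f (p ^ (k + 1) * m) - f (p ^ k * m))
    (n : ℕ) {p : ℕ} (hp : p.Prime) :
    (p : ℤ) ^ n.factorization p ∣ ∑ d ∈ n.divisors, μ (n / d) * f d := by
  rcases eq_or_ne n 0 with rfl | hn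
  · simp
  rcases Nat.eq_zero_or_pos (n.factorization p) with hk | hk
  · simp [hk]
  obtain ⟨k, hk⟩ : ∃ k, n.factorization p = k + 1 := ⟨_, (Nat.succ_pred_eq_of_pos hk).symm⟩
  have hpm := Nat.not_dvd_ordCompl hp hn
  have hnm := Nat.ordProj_mul_ordCompl_eq_self n p
  set m := n / p ^ n.factorization p
  rw [hk] at hnm ⊢
  rw [sum_divisors_moebius_div_mul_eq_sum_moebius_mul_div, ← hnm,
    sum_divisors_prime_pow_mul_moebius_mul hp hpm]
  refine dvd_sum fun e he => Dvd.dvd.mul_left ?_ _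
  obtain ⟨he, hm⟩ := Nat.mem_divisors.mp he
  have hdiv : p ^ (k + 1) * m / (p * e) = p ^ k * (m / e) := by
    rw [pow_succ', mul_assoc, Nat.mul_div_mul_left _ _ hp.pos, Nat.mul_div_assoc _ he]
  rw [Nat.mul_div_assoc _ he, hdiv]
  exact hf p k _ hp (Nat.div_pos (Nat.le_of_dvd (Nat.pos_of_ne_zero hm) he)
    (Nat.pos_of_dvd_of_pos he (Nat.pos_of_ne_zero hm)))

theorem dvd_sum_divisors_moebius_mul {f : ℕ → ℤ}
    (hf : ∀ p k m : ℕ, p.Prime → 0 < m → (p : ℤ) ^ (k + 1) ∣ f (p ^ (k + 1) * m) - f (p ^ k * m))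
    (n : ℕ) : (n : ℤ) ∣ ∑ d ∈ n.divisors, μ (n / d) * f d := by
  rcases eq_or_ne n 0 with rfl | hn
  · simp
  rw [Int.natCast_dvd]
  refine (Nat.dvd_iff_prime_pow_dvd_dvd _ _).mpr fun p i hp hpi => Int.natCast_dvd.mp ?_
  push_cast
  exact (pow_dvd_pow _ ((hp.pow_dvd_iff_le_factorization hn).mp hpi)).trans
    (pow_factorization_dvd_sum_divisors_moebius_mul hf n hp)

theorem Int.prime_pow_dvd_pow_sub_pow (a : ℤ) {p : ℕ} (hp : p.Prime) (k m : ℕ) :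
    (p : ℤ) ^ (k + 1) ∣ a ^ (p ^ (k + 1) * m) - a ^ (p ^ k * m) := by
  have hfermat : (p : ℤ) ∣ (a ^ m) ^ p - a ^ m := by
    have := Fact.mk hp
    rw [← ZMod.intCast_zmod_eq_zero_iff_dvd]
    push_cast
    rw [ZMod.pow_card, sub_self]
  rw [show a ^ (p ^ (k + 1) * m) = ((a ^ m) ^ p) ^ p ^ k by ring,
    show a ^ (p ^ k * m) = (a ^ m) ^ p ^ k by ring]
  exact dvd_sub_pow_of_dvd_sub hfermat k

theorem prime_pow_dvd_mul_pow_pred_sub {a c : ℤ} {p : ℕ} (hp : p.Prime)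
    (hpc : (p : ℤ) ∣ a → (p : ℤ) ∣ c) (k : ℕ) {m : ℕ} (hm : 0 < m) :
    (p : ℤ) ^ (k + 1) ∣ c * a ^ (p ^ (k + 1) * m - 1) - c * a ^ (p ^ k * m - 1) := by
  by_cases hpa : (p : ℤ) ∣ a
  · have hk : k < p ^ k * m := (Nat.lt_pow_self hp.one_lt).trans_le (Nat.le_mul_of_pos_right _ hm)
    have hdvd : ∀ t, k ≤ t → (p : ℤ) ^ (k + 1) ∣ c * a ^ t := fun t ht => by
      rw [pow_succ']
      exact mul_dvd_mul (hpc hpa) ((pow_dvd_pow_of_dvd hpa k).trans (pow_dvd_pow a ht))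
    have hk' : p ^ k * m ≤ p ^ (k + 1) * m :=
      Nat.mul_le_mul_right m (Nat.pow_le_pow_right hp.pos k.le_succ)
    exact dvd_sub (hdvd _ (by omega)) (hdvd _ (by omega))
  · have hcop : IsCoprime ((p : ℤ) ^ (k + 1)) a :=
      ((Nat.prime_iff_prime_int.mp hp).coprime_iff_not_dvd.mpr hpa).pow_left
    refine hcop.dvd_of_dvd_mul_left ?_
    have hpos : ∀ j, p ^ j * m ≠ 0 := fun j => mul_ne_zero (pow_ne_zero j hp.ne_zero) hm.ne'
    rw [mul_sub, mul_left_comm, mul_pow_sub_one (hpos _), mul_left_comm, mul_pow_sub_one (hpos _),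
      ← mul_sub]
    exact (Int.prime_pow_dvd_pow_sub_pow a hp k m).mul_left c

theorem sum_divisors_moebius_eq_ite (n : ℕ) :
    ∑ d ∈ n.divisors, (μ d : ℤ) = if n = 1 then 1 else 0 := by
  rw [← coe_mul_zeta_apply, moebius_mul_coe_zeta, ArithmeticFunction.one_apply]

theorem sum_divisors_moebius_div_mul_pow_nonneg (a n : ℕ) :
    0 ≤ ∑ d ∈ n.divisors, μ (n / d) * (a : ℤ) ^ d := by
  rcases eq_or_ne n 0 with rfl | hn
  · simp
  rcases le_or_gt a 1 with ha | ha
  · have hpow : ∀ d ∈ n.divisors, (a : ℤ) ^ d = a := fun d hd => by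
      have hd : d ≠ 0 := (Nat.pos_of_mem_divisors hd).ne'
      interval_cases a <;> simp [hd]
    rw [sum_congr rfl fun d hd => by rw [hpow d hd], ← sum_mul,
      Nat.sum_div_divisors n (fun d => μ d), sum_divisors_moebius_eq_ite]
    split_ifs <;> positivity
  · rw [← Nat.cons_self_properDivisors hn, sum_cons, Nat.div_self (Nat.pos_of_ne_zero hn),
      moebius_apply_one, one_mul]
    have hgeom : ∑ d ∈ n.properDivisors, (a : ℤ) ^ d < (a : ℤ) ^ n := by
      exact_mod_cast Nat.geomSum_lt ha fun d hd => (Nat.mem_properDivisors.mp hd).2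
    have hbound : -∑ d ∈ n.properDivisors, (a : ℤ) ^ d ≤
        ∑ d ∈ n.properDivisors, μ (n / d) * (a : ℤ) ^ d := by
      rw [← sum_neg_distrib]
      refine sum_le_sum fun d _ => ?_
      rw [← neg_one_mul]
      exact mul_le_mul_of_nonneg_right (neg_le_of_abs_le abs_moebius_le_one) (by positivity)
    linarith

theorem Nat.pow_div_eq_div_mul_pow_pred {a b d : ℕ} (hba : b ∣ a) (hd : d ≠ 0) :
    a ^ d / b = a / b * a ^ (d - 1) := by
  rw [Nat.div_mul_right_comm hba, mul_pow_sub_one hd]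

theorem sum_divisors_moebius_div_mul_mul_pow_pred_nonneg {a : ℕ} (ha : 0 < a) (c n : ℕ) :
    0 ≤ ∑ d ∈ n.divisors, μ (n / d) * ((c : ℤ) * (a : ℤ) ^ (d - 1)) := by
  refine nonneg_of_mul_nonneg_right ?_ (by exact_mod_cast ha : (0 : ℤ) < a)
  have hscale : (a : ℤ) * ∑ d ∈ n.divisors, μ (n / d) * ((c : ℤ) * (a : ℤ) ^ (d - 1)) =
      c * ∑ d ∈ n.divisors, μ (n / d) * (a : ℤ) ^ d := by
    simp only [mul_sum]
    refine sum_congr rfl fun d hd => ?_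
    rw [← mul_pow_sub_one (Nat.pos_of_mem_divisors hd).ne']
    ring
  rw [hscale]
  exact mul_nonneg (Nat.cast_nonneg c) (sum_divisors_moebius_div_mul_pow_nonneg a n)

theorem stmt_14_general (a b : ℕ) (ha : 0 < a) (hba : b ∣ a)
    (hp : ∀ p : ℕ, p.Prime → p ∣ a → p ∣ a / b) :
    ∀ n : ℕ, 1 ≤ n → ∃ k : ℕ,
      ∑ d ∈ n.divisors, moebius (n / d) * ((a ^ d / b : ℕ) : ℤ) =
        (n : ℤ) * (k : ℤ) := by
  intro n hn
  have hterms : ∑ d ∈ n.divisors, μ (n / d) * ((a ^ d / b : ℕ) : ℤ) =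
      ∑ d ∈ n.divisors, μ (n / d) * (((a / b : ℕ) : ℤ) * (a : ℤ) ^ (d - 1)) :=
    sum_congr rfl fun d hd => by
      rw [Nat.pow_div_eq_div_mul_pow_pred hba (Nat.pos_of_mem_divisors hd).ne', Nat.cast_mul,
        Nat.cast_pow]
  obtain ⟨t, ht⟩ := dvd_sum_divisors_moebius_mul
    (f := fun d => ((a / b : ℕ) : ℤ) * (a : ℤ) ^ (d - 1)) (fun q k m hq hm =>
      prime_pow_dvd_mul_pow_pred_sub hq (fun h => by exact_mod_cast hp q hq (by exact_mod_cast h))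
        k hm) n
  have hnonneg := sum_divisors_moebius_div_mul_mul_pow_pred_nonneg ha (a / b) n
  rw [ht] at hnonneg
  lift t to ℕ using nonneg_of_mul_nonneg_right hnonneg (by exact_mod_cast hn)
  exact ⟨t, hterms.trans ht⟩

theorem stmt_14 (a b : ℕ) (ha : 0 < a) (hb : 0 < b) (hba : b ∣ a)
    (hp : ∀ p : ℕ, p.Prime → p ∣ a → p ∣ a / b) :
    ∀ n : ℕ, 1 ≤ n → ∃ k : ℕ,
      ∑ d ∈ n.divisors, moebius (n / d) * ((a ^ d / b : ℕ) : ℤ) =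
        (n : ℤ) * (k : ℤ) :=
  stmt_14_general a b ha hba hp
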